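/- Let v and u be K-adjacent x-vertices (some K-edge joins v and u), and suppose a(v, K, K, 0) > R, a(v, I, K, 0) > R, a(u, K, K, 0) > R, a(u, I, K, 0) > R, A(v, I) < R, and A(u, I) < R. Then for every feasible solution x*, the output values of the local algorithm satisfy x_v + x_u ≥ ω(x*). -/

import Mathlib

/-- An undirected multigraph with two-coloured vertices and two-coloured edges.
`isX v` means `v` is an x-vertex (otherwise `v` is a 0-vertex);
`isK e` means `e` is a K-edge (otherwise `e` is an I-edge). -/
structure ColoredMultigraph (V : Type) (E : Type) where
  ends : E → Sym2 V
  isX : V → Prop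
  isK : E → Prop

namespace ColoredMultigraph

variable {V E : Type} (G : ColoredMultigraph V E)

/-- Edge `e` joins vertices `a` and `b`. -/
def Joins (e : E) (a b : V) : Prop := G.ends e = s(a, b)

/-- `AltWalk G v c c' u n` : there is an alternating walk from `v` to `u` whose
first edge has colour `c` (`true` = K-edge, `false` = I-edge), whose last edge
has colour `c'`, and whose K-length (number of K-edges) is `n`. -/
inductive AltWalk : V → Bool → Bool → V → ℕ → Prop
  | single (e : E) (a b : V) (c : Bool) :
      G.Joins e a b → (G.isK e ↔ c = true) → AltWalk a c c b (cond c 1 0)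
  | cons (e : E) (a b : V) (c c' : Bool) (u : V) (n : ℕ) :
      G.Joins e a b → (G.isK e ↔ c = true) → AltWalk b (!c) c' u n →
      AltWalk a c c' u (cond c 1 0 + n)

/-- `a(v,X,Y,0)` : the minimum K-length of a `(v,X,Y,0)`-walk, that is, a walk
from `v` to some 0-vertex starting with an X-edge and ending with a Y-edge
(`∞` if no such walk exists). -/
noncomputable def walkInf (v : V) (X Y : Bool) : ℕ∞ :=
  sInf {n : ℕ∞ | ∃ m : ℕ, n = m ∧ ∃ u, G.AltWalk v X Y u m ∧ ¬ G.isX u}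

/-- `A(v,X)` : the maximum K-length of an alternating walk starting at `v` with
an X-edge (`∞` if walks of arbitrarily large K-length exist). -/
noncomputable def walkSup (v : V) (X : Bool) : ℕ∞ :=
  sSup {n : ℕ∞ | ∃ m : ℕ, n = m ∧ ∃ Y u, G.AltWalk v X Y u m}

/-- `b(v,X,Y,0) = min {a(v,X,Y,0), R}`. -/
noncomputable def bnd (R : ℕ) (v : V) (X Y : Bool) : ℕ∞ :=
  min (G.walkInf v X Y) (R : ℕ∞)

/-- `B(v,X) = min {A(v,X), R}`. -/
noncomputable def Bnd (R : ℕ) (v : V) (X : Bool) : ℕ∞ :=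
  min (G.walkSup v X) (R : ℕ∞)

/-- The value `p_v` chosen by the local algorithm:
`p_v = b(v,I,K,0)` if `a(v,K,K,0) ≤ R`, and
`p_v = min {b(v,I,K,0), B(v,K)}` otherwise. -/
noncomputable def pv (R : ℕ) (v : V) : ℕ∞ :=
  if G.walkInf v true true ≤ (R : ℕ∞) then G.bnd R v false true
  else min (G.bnd R v false true) (G.Bnd R v true)

/-- The value `q_v` chosen by the local algorithm:
`q_v = b(v,K,K,0)` if `a(v,I,K,0) ≤ R`, and
`q_v = min {b(v,K,K,0), B(v,I)}` otherwise. -/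
noncomputable def qv (R : ℕ) (v : V) : ℕ∞ :=
  if G.walkInf v false true ≤ (R : ℕ∞) then G.bnd R v true true
  else min (G.bnd R v true true) (G.Bnd R v false)

open Classical in
/-- The output value of the local algorithm: `p_v / (p_v + q_v)` at an x-vertex
`v`, and `0` at a 0-vertex. -/
noncomputable def xval (R : ℕ) (v : V) : ℝ :=
  if G.isX v then
    ((G.pv R v).toNat : ℝ) / (((G.pv R v).toNat : ℝ) + ((G.qv R v).toNat : ℝ))
  else 0

/-- Structural assumptions: every x-vertex is incident to at least one K-edge
and at least one I-edge, every 0-vertex is incident to exactly one edge, and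
every edge has at least one x-vertex endpoint. -/
def WellFormed : Prop :=
  (∀ v, G.isX v → ∃ e, v ∈ G.ends e ∧ G.isK e) ∧
  (∀ v, G.isX v → ∃ e, v ∈ G.ends e ∧ ¬ G.isK e) ∧
  (∀ v, ¬ G.isX v → ∃! e, v ∈ G.ends e) ∧
  (∀ e a b, G.Joins e a b → G.isX a ∨ G.isX b)

/-- A feasible solution: nonnegative, zero at 0-vertices, and satisfying
`x a + x b ≤ 1` for every I-edge `{a, b}`. -/
def Feasible (x : V → ℝ) : Prop :=
  (∀ a, 0 ≤ x a) ∧ (∀ a, ¬ G.isX a → x a = 0) ∧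
  (∀ e a b, G.Joins e a b → ¬ G.isK e → x a + x b ≤ 1)

/-- The utility `ω(x)` of a solution: the minimum (infimum) over K-edges
`{a, b}` of `x a + x b`. -/
noncomputable def utility (x : V → ℝ) : ℝ :=
  sInf {r : ℝ | ∃ e a b, G.Joins e a b ∧ G.isK e ∧ r = x a + x b}

end ColoredMultigraph

/-!
Write `k_v = A(v,I)` and `k_u = A(u,I)`, both finite and below `R`. As every `a`-value at `v`
exceeds `R`, the algorithm takes `q_v = k_v` and `p_v = min {A(v,K), R}`; the K-edge `vu`
followed by a longest I-walk from `u` is a K-walk from `v`, so `p_v ≥ k_u + 1` and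
`x_v ≥ (k_u + 1) / (k_u + k_v + 1)`, and symmetrically at `u`.

A longest walk from `v` starting with an I-edge may be taken to end with an I-edge: if it ends
with a K-edge, the end is an x-vertex (as `a(v,I,K,0) > R`) and an I-edge can be appended.
Summing the constraints of `x*` along it with alternating signs gives
`x*_v ≤ k_v + 1 - k_v ω`. Together with the same bound at `u` and `ω ≤ x*_v + x*_u` this yields
`ω (k_u + k_v + 1) ≤ k_u + k_v + 2`, which is the sum of the two lower bounds.
-/

namespace ColoredMultigraph

variable {V E : Type} {G : ColoredMultigraph V E}

lemma Joins.symm {e : E} {a b : V} (h : G.Joins e a b) : G.Joins e b a :=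
  h.trans Sym2.eq_swap

lemma exists_joins_of_mem {e : E} {a : V} (h : a ∈ G.ends e) : ∃ b, G.Joins e a b :=
  Sym2.mem_iff_exists.mp h

lemma AltWalk.snoc {a b w : V} {c c' : Bool} {n : ℕ} {e : E} (h : G.AltWalk a c c' b n)
    (hj : G.Joins e b w) (hk : G.isK e ↔ (!c') = true) :
    G.AltWalk a c (!c') w (n + cond (!c') 1 0) := by
  induction h with
  | single e₀ a₀ b₀ c₀ hj₀ hk₀ =>
    exact .cons e₀ a₀ b₀ c₀ (!c₀) w _ hj₀ hk₀ (.single e b₀ w (!c₀) hj hk)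
  | cons e₀ a₀ b₀ c₀ c₁ u₀ n₀ hj₀ hk₀ _ ih =>
    rw [add_assoc]
    exact .cons e₀ a₀ b₀ c₀ (!c₁) w _ hj₀ hk₀ (ih hj hk)

lemma le_walkSup {v w : V} {X Y : Bool} {m : ℕ} (h : G.AltWalk v X Y w m) :
    (m : ℕ∞) ≤ G.walkSup v X :=
  le_sSup ⟨m, rfl, Y, w, h⟩

lemma walkInf_le {v w : V} {X Y : Bool} {m : ℕ} (h : G.AltWalk v X Y w m) (hw : ¬ G.isX w) :
    G.walkInf v X Y ≤ m :=
  sInf_le ⟨m, rfl, w, h, hw⟩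

lemma exists_altWalk_eq_walkSup {v w : V} {X Y : Bool} {m : ℕ} (h : G.AltWalk v X Y w m)
    (htop : G.walkSup v X < ⊤) :
    ∃ (k : ℕ) (Y : Bool) (w : V), (k : ℕ∞) = G.walkSup v X ∧ G.AltWalk v X Y w k := by
  have : Nonempty {n : ℕ∞ | ∃ m : ℕ, n = m ∧ ∃ Y u, G.AltWalk v X Y u m} :=
    ⟨⟨m, m, rfl, Y, w, h⟩⟩
  obtain ⟨k, hk, Y, w, hw⟩ := ENat.sSup_mem_of_nonempty_of_lt_top htop
  exact ⟨k, Y, w, hk.symm, hw⟩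

lemma exists_altWalk_false_false_eq_walkSup
    (hI : ∀ v, G.isX v → ∃ e, v ∈ G.ends e ∧ ¬ G.isK e) {v : V} (hv : G.isX v)
    (hlt : G.walkSup v false < G.walkInf v false true) (htop : G.walkSup v false < ⊤) :
    ∃ (k : ℕ) (w : V), (k : ℕ∞) = G.walkSup v false ∧ G.AltWalk v false false w k := by
  obtain ⟨e, he, hke⟩ := hI v hv
  obtain ⟨b, hb⟩ := exists_joins_of_mem he
  obtain ⟨k, Y, w, hk, hw⟩ :=
    exists_altWalk_eq_walkSup (.single e v b false hb (by simpa using hke)) htop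
  cases Y with
  | false => exact ⟨k, w, hk, hw⟩
  | true =>
    by_cases hxw : G.isX w
    · obtain ⟨e', he', hke'⟩ := hI w hxw
      obtain ⟨w', hw'⟩ := exists_joins_of_mem he'
      exact ⟨k, w', hk, by simpa using hw.snoc hw' (by simpa using hke')⟩
    · exact absurd ((walkInf_le hw hxw).trans_eq hk) hlt.not_ge

lemma Feasible.utility_le {x : V → ℝ} (hx : G.Feasible x) {e : E} {a b : V}
    (hj : G.Joins e a b) (hk : G.isK e) : G.utility x ≤ x a + x b :=
  csInf_le ⟨0, by rintro r ⟨e, a, b, -, -, rfl⟩; exact add_nonneg (hx.1 a) (hx.1 b)⟩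
    ⟨e, a, b, hj, hk, rfl⟩

/-- Along an alternating walk, the I-edge constraints `x a + x b ≤ 1` and the K-edge bounds
`ω ≤ x a + x b` telescope with alternating signs; the right-hand side is
`#(I-edges) - #(K-edges) ω`. -/
lemma Feasible.altWalk_bound {x : V → ℝ} (hx : G.Feasible x) {a b : V} {c c' : Bool} {n : ℕ}
    (h : G.AltWalk a c c' b n) :
    (if c then -x a else x a) + (if c' then -x b else x b) ≤
      ((if c then 0 else 1) + (if c' then 0 else 1) + n - 1 : ℝ) - n * G.utility x := by
  induction h with
  | single e a b c hj hk =>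
    cases c
    · have := hx.2.2 e a b hj (by simpa using hk)
      simp only [Bool.false_eq_true, if_false, cond_false, Nat.cast_zero]; linarith
    · have := hx.utility_le hj (hk.mpr rfl)
      simp only [if_true, cond_true, Nat.cast_one]; linarith
  | cons e a b c c' u n hj hk _ ih =>
    cases c
    · have := hx.2.2 e a b hj (by simpa using hk)
      cases c' <;> simp only [Bool.not_false, Bool.false_eq_true, if_true, if_false, cond_false,
        Nat.cast_add, Nat.cast_zero] at ih ⊢ <;> linarith
    · have := hx.utility_le hj (hk.mpr rfl)
      cases c' <;> simp only [Bool.not_true, Bool.false_eq_true, if_true, if_false, cond_true,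
        Nat.cast_add, Nat.cast_one] at ih ⊢ <;> linarith

lemma Feasible.le_of_altWalk_false_false {x : V → ℝ} (hx : G.Feasible x) {a b : V} {n : ℕ}
    (h : G.AltWalk a false false b n) : x a ≤ n + 1 - n * G.utility x := by
  have := hx.altWalk_bound h
  simp only [Bool.false_eq_true, if_false] at this
  linarith [hx.1 b]

lemma pv_eq_min_walkSup {R : ℕ} {v : V} (hKK : (R : ℕ∞) < G.walkInf v true true)
    (hIK : (R : ℕ∞) < G.walkInf v false true) :
    G.pv R v = min (G.walkSup v true) R := by
  rw [pv, if_neg hKK.not_ge, bnd, Bnd, min_eq_right hIK.le, min_left_comm, min_self]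

lemma qv_eq_walkSup {R : ℕ} {v : V} (hKK : (R : ℕ∞) < G.walkInf v true true)
    (hIK : (R : ℕ∞) < G.walkInf v false true) (hA : G.walkSup v false ≤ R) :
    G.qv R v = G.walkSup v false := by
  rw [qv, if_neg hIK.not_ge, bnd, Bnd, min_eq_right hKK.le, min_eq_left hA, min_eq_right hA]

lemma succ_le_toNat_pv {R : ℕ} {v u w : V} {Y : Bool} {k : ℕ} {e : E}
    (hKK : (R : ℕ∞) < G.walkInf v true true) (hIK : (R : ℕ∞) < G.walkInf v false true)
    (hj : G.Joins e v u) (hK : G.isK e) (hw : G.AltWalk u false Y w k) (hkR : k < R) :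
    k + 1 ≤ (G.pv R v).toNat := by
  have hwalk : (k + 1 : ℕ) ≤ G.walkSup v true := by
    rw [add_comm]; exact le_walkSup (.cons e v u true Y w k hj (iff_of_true hK rfl) hw)
  have hpv : ((k + 1 : ℕ) : ℕ∞) ≤ G.pv R v := by
    rw [pv_eq_min_walkSup hKK hIK]; exact le_min hwalk (by exact_mod_cast hkR)
  have hne : G.pv R v ≠ ⊤ := by
    rw [pv_eq_min_walkSup hKK hIK]; exact ((min_le_right _ _).trans_lt (ENat.natCast_lt_top R)).ne
  exact (ENat.toNat_natCast (k + 1)).symm.trans_le (ENat.toNat_le_toNat hpv hne)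

lemma div_le_xval {R : ℕ} {v u w : V} {Y : Bool} {k kv : ℕ} {e : E} (hv : G.isX v)
    (hKK : (R : ℕ∞) < G.walkInf v true true) (hIK : (R : ℕ∞) < G.walkInf v false true)
    (hkv : (kv : ℕ∞) = G.walkSup v false) (hkvR : kv < R)
    (hj : G.Joins e v u) (hK : G.isK e) (hw : G.AltWalk u false Y w k) (hkR : k < R) :
    (k + 1 : ℝ) / (k + 1 + kv) ≤ G.xval R v := by
  have hq : (G.qv R v).toNat = kv := by
    rw [qv_eq_walkSup hKK hIK (hkv ▸ by exact_mod_cast hkvR.le), ← hkv, ENat.toNat_natCast]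
  have hp : (k + 1 : ℝ) ≤ (G.pv R v).toNat := by
    exact_mod_cast succ_le_toNat_pv hKK hIK hj hK hw hkR
  rw [xval, if_pos hv, hq,
    div_le_div_iff₀ (by positivity) (by linarith [kv.cast_nonneg (α := ℝ)])]
  nlinarith [mul_le_mul_of_nonneg_right hp kv.cast_nonneg (α := ℝ)]

end ColoredMultigraph

lemma le_div_add_div_of_le_sub_mul {ω s t k l : ℝ} (hk : 0 ≤ k) (hl : 0 ≤ l)
    (hω : ω ≤ s + t) (hs : s ≤ k + 1 - k * ω) (ht : t ≤ l + 1 - l * ω) :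
    ω ≤ (l + 1) / (l + 1 + k) + (k + 1) / (k + 1 + l) := by
  have hsum : l + 1 + k = k + 1 + l := by ring
  rw [hsum, ← add_div, le_div_iff₀ (by positivity)]
  nlinarith

theorem stmt_18_general {V E : Type} (G : ColoredMultigraph V E) (hG : G.WellFormed)
    (R : ℕ) (v u : V) (hv : G.isX v) (hu : G.isX u)
    (hadj : ∃ e, G.Joins e v u ∧ G.isK e)
    (hvKK : (R : ℕ∞) < G.walkInf v true true)
    (hvIK : (R : ℕ∞) < G.walkInf v false true)
    (huKK : (R : ℕ∞) < G.walkInf u true true)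
    (huIK : (R : ℕ∞) < G.walkInf u false true)
    (hAvI : G.walkSup v false < (R : ℕ∞))
    (hAuI : G.walkSup u false < (R : ℕ∞))
    (xstar : V → ℝ) (hxstar : G.Feasible xstar) :
    G.utility xstar ≤ G.xval R v + G.xval R u := by
  obtain ⟨e, he, hke⟩ := hadj
  obtain ⟨kv, zv, hkv, hwv⟩ := ColoredMultigraph.exists_altWalk_false_false_eq_walkSup hG.2.1 hv
    (hAvI.trans hvIK) (hAvI.trans (ENat.natCast_lt_top R))
  obtain ⟨ku, zu, hku, hwu⟩ := ColoredMultigraph.exists_altWalk_false_false_eq_walkSup hG.2.1 hu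
    (hAuI.trans huIK) (hAuI.trans (ENat.natCast_lt_top R))
  have hkvR : kv < R := by exact_mod_cast hkv ▸ hAvI
  have hkuR : ku < R := by exact_mod_cast hku ▸ hAuI
  calc G.utility xstar
      ≤ (ku + 1 : ℝ) / (ku + 1 + kv) + (kv + 1) / (kv + 1 + ku) :=
        le_div_add_div_of_le_sub_mul kv.cast_nonneg ku.cast_nonneg (hxstar.utility_le he hke)
          (hxstar.le_of_altWalk_false_false hwv) (hxstar.le_of_altWalk_false_false hwu)
    _ ≤ G.xval R v + G.xval R u :=
        add_le_add (ColoredMultigraph.div_le_xval hv hvKK hvIK hkv hkvR he hke hwu hkuR)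
          (ColoredMultigraph.div_le_xval hu huKK huIK hku hkuR he.symm hke hwv hkvR)

/-- Let `v` and `u` be K-adjacent x-vertices, and suppose
`a(v,K,K,0) > R`, `a(v,I,K,0) > R`, `a(u,K,K,0) > R`, `a(u,I,K,0) > R`,
`A(v,I) < R`, and `A(u,I) < R`. Then for every feasible solution `x*`, the
output values of the local algorithm satisfy `x_v + x_u ≥ ω(x*)`. -/
theorem stmt_18 {V E : Type} (G : ColoredMultigraph V E) (hG : G.WellFormed)
    (R : ℕ) (hR : 1 ≤ R) (v u : V) (hv : G.isX v) (hu : G.isX u)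
    (hadj : ∃ e, G.Joins e v u ∧ G.isK e)
    (hvKK : (R : ℕ∞) < G.walkInf v true true)
    (hvIK : (R : ℕ∞) < G.walkInf v false true)
    (huKK : (R : ℕ∞) < G.walkInf u true true)
    (huIK : (R : ℕ∞) < G.walkInf u false true)
    (hAvI : G.walkSup v false < (R : ℕ∞))
    (hAuI : G.walkSup u false < (R : ℕ∞))
    (xstar : V → ℝ) (hxstar : G.Feasible xstar) :
    G.utility xstar ≤ G.xval R v + G.xval R u :=
  stmt_18_general G hG R v u hv hu hadj hvKK hvIK huKK huIK hAvI hAuI xstar hxstar
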